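/- arXiv:2112.13629 — 7 statements merged into one kernel-verified Lean document; each statement's English description precedes it below -/
import Mathlib

section
/- Let q be an element of a commutative ℚ-algebra and let R be a formal power series with constant term 1 satisfying R = 1 + q·x·R + x·R². Then 1 - (q+1)x - x(R - 1) is a unit in the formal power series ring and (1 - (q+1)x)/(1 - (q+1)x - x(R-1)) = (1 - (q+1)x)·R. -/
open PowerSeries

theorem stmt6_general (A : Type*) [CommRing A] (q : A)
    (R : PowerSeries A)
    (hR : R = 1 + C q * X * R + X * R ^ 2) :
    IsUnit (1 - (C q + 1) * X - X * (R - 1)) ∧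
      (1 - (C q + 1) * X - X * (R - 1)) * ((1 - (C q + 1) * X) * R) =
        1 - (C q + 1) * X := by
  -- The functional equation says that `R` inverts `1 - qX - XR = 1 - (q+1)X - X(R-1)`.
  have inverse : (1 - (C q + 1) * X - X * (R - 1)) * R = 1 := by
    linear_combination hR
  exact ⟨.of_mul_eq_one R inverse,
    by linear_combination (1 - (C q + 1) * X) * inverse⟩

theorem stmt6 (A : Type*) [CommRing A] [Algebra ℚ A] (q : A)
    (R : PowerSeries A) (hR0 : constantCoeff R = 1)
    (hR : R = 1 + C q * X * R + X * R ^ 2) :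
    IsUnit (1 - (C q + 1) * X - X * (R - 1)) ∧
      (1 - (C q + 1) * X - X * (R - 1)) * ((1 - (C q + 1) * X) * R) =
        1 - (C q + 1) * X :=
  stmt6_general A q R hR
end

section
/- Let q be an element of a commutative ℚ-algebra and let S be a formal power series with constant term 1 satisfying S = 1 - q·x·S + (1+q)·x·S². Then 1 - x - (q+1)x(S - 1) is a unit and (1 - x)/(1 - x - (q+1)x(S-1)) = (1 - x)·S. -/
open PowerSeries

theorem stmt7_general (A : Type*) [CommRing A] (q : A)
    (S : PowerSeries A)
    (hS : S = 1 - C q * X * S + (1 + C q) * X * S ^ 2) :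
    IsUnit (1 - X - (C q + 1) * X * (S - 1)) ∧
      (1 - X - (C q + 1) * X * (S - 1)) * ((1 - X) * S) = 1 - X := by
  have hinv : (1 - X - (C q + 1) * X * (S - 1)) * S = 1 := by
    linear_combination hS
  exact ⟨.of_mul_eq_one _ hinv, by rw [mul_left_comm, hinv, mul_one]⟩

theorem stmt7 (A : Type*) [CommRing A] [Algebra ℚ A] (q : A)
    (S : PowerSeries A) (hS0 : constantCoeff S = 1)
    (hS : S = 1 - C q * X * S + (1 + C q) * X * S ^ 2) :
    IsUnit (1 - X - (C q + 1) * X * (S - 1)) ∧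
      (1 - X - (C q + 1) * X * (S - 1)) * ((1 - X) * S) = 1 - X :=
  stmt7_general A q S hS
end

section
/- Let t be an element of a commutative ℚ-algebra and let N be a formal power series with constant term 1 satisfying N = 1 + (t-1)·x·N + x·N². Then 1 - tx - x(N - 1) is a unit and (1 - tx)/(1 - tx - x(N-1)) = (1 - tx)·N. -/
open PowerSeries

theorem stmt8_general (A : Type*) [CommRing A] (t : A)
    (N : PowerSeries A)
    (hN : N = 1 + (C t - 1) * X * N + X * N ^ 2) :
    IsUnit (1 - C t * X - X * (N - 1)) ∧
      (1 - C t * X - X * (N - 1)) * ((1 - C t * X) * N) = 1 - C t * X := by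
  have inverse_N : (1 - C t * X - X * (N - 1)) * N = 1 := by linear_combination hN
  exact ⟨IsUnit.of_mul_eq_one _ inverse_N, by linear_combination (1 - C t * X) * inverse_N⟩

theorem stmt8 (A : Type*) [CommRing A] [Algebra ℚ A] (t : A)
    (N : PowerSeries A) (hN0 : constantCoeff N = 1)
    (hN : N = 1 + (C t - 1) * X * N + X * N ^ 2) :
    IsUnit (1 - C t * X - X * (N - 1)) ∧
      (1 - C t * X - X * (N - 1)) * ((1 - C t * X) * N) = 1 - C t * X :=
  stmt8_general A t N hN
end

section
/- Let t be an invertible element of a commutative ℚ-algebra and let N be a formal power series with constant term 1 satisfying N = 1 + (t-1)xN + xN². Define f = (N - 1)/(tx) (the series with f·tx = N - 1, which exists since N-1 has zero constant term). Then f = (1 + xf)(1 + txf), and consequently (1 - (1+t)x)/(1 - (1+t)x - x²tf) = (1 - (1+t)x)·f. -/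
/-!
Write `u = t x f`, so that `N = 1 + u`. Substituting into `N = 1 + (t - 1) x N + x N²` gives
`u = x (1 + u) (t + u) = t x (1 + x f)(1 + t x f)`, and cancelling the regular factor `t x` yields
`f = (1 + x f)(1 + t x f)`. Expanding the product, this says `f - (1 + t) x f - t x² f² = 1`, i.e.
`f` is the inverse of `1 - (1 + t) x - x² t f`, whose constant coefficient is `1`.
-/

open PowerSeries

theorem mul_eq_one_of_eq_one_add_mul_mul_one_add_mul {R : Type*} [CommRing R] {x s f : R}
    (h : f = (1 + x * f) * (1 + s * x * f)) : (1 - (1 + s) * x - x ^ 2 * s * f) * f = 1 := by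
  linear_combination h

namespace PowerSeries

variable {A : Type*} [CommRing A]

theorem mul_C_mul_X_cancel {t : A} (ht : IsUnit t) {φ ψ : A⟦X⟧}
    (h : φ * (C t * X) = ψ * (C t * X)) : φ = ψ :=
  mul_X_cancel <| (ht.map C).mul_right_cancel <| by linear_combination h

theorem eq_one_add_X_mul_mul_one_add_C_mul_X_mul {t : A} (ht : IsUnit t) {N f : A⟦X⟧}
    (hN : N = 1 + (C t - 1) * X * N + X * N ^ 2) (hf : f * (C t * X) = N - 1) :
    f = (1 + X * f) * (1 + C t * X * f) := by
  apply mul_C_mul_X_cancel ht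
  linear_combination (1 - X * (1 + C t + C t * X * f + N - 1)) * hf + hN

end PowerSeries

theorem stmt9_general (A : Type*) [CommRing A] (t : A) (ht : IsUnit t)
    (N : PowerSeries A)
    (hN : N = 1 + (C t - 1) * X * N + X * N ^ 2)
    (f : PowerSeries A) (hf : f * (C t * X) = N - 1) :
    f = (1 + X * f) * (1 + C t * X * f) ∧
      IsUnit (1 - (1 + C t) * X - X ^ 2 * C t * f) ∧
      (1 - (1 + C t) * X - X ^ 2 * C t * f) * ((1 - (1 + C t) * X) * f) =
        1 - (1 + C t) * X := by
  have hfactor := eq_one_add_X_mul_mul_one_add_C_mul_X_mul ht hN hf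
  have hinv := mul_eq_one_of_eq_one_add_mul_mul_one_add_mul hfactor
  refine ⟨hfactor, isUnit_iff_constantCoeff.mpr (by simp), ?_⟩
  linear_combination (1 - (1 + C t) * X) * hinv

theorem stmt9 (A : Type*) [CommRing A] [Algebra ℚ A] (t : A) (ht : IsUnit t)
    (N : PowerSeries A) (hN0 : constantCoeff N = 1)
    (hN : N = 1 + (C t - 1) * X * N + X * N ^ 2)
    (f : PowerSeries A) (hf : f * (C t * X) = N - 1) :
    f = (1 + X * f) * (1 + C t * X * f) ∧
      IsUnit (1 - (1 + C t) * X - X ^ 2 * C t * f) ∧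
      (1 - (1 + C t) * X - X ^ 2 * C t * f) * ((1 - (1 + C t) * X) * f) =
        1 - (1 + C t) * X :=
  stmt9_general A t ht N hN f hf
end

section
/- Let a, b, c ≥ 0 be rationals and define in ℚ[[x]]: α = 2bx(1-ax)/(1-2cx+x²), β = ax/(1-ax), γ = 2abx²/(1-2cx+x²). Then γ = αβ, and (1-α)/(1-α-αβ) = 1 + 2abx²/(1 - 2(b+c)x + x²); consequently the coefficient of xⁿ equals 2ab·U_{n-2}(b+c) for n ≥ 2, where U_n are the Chebyshev polynomials of the second kind. -/
open PowerSeries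

/-!
Write `Q t = 1 - 2tX + X²`. Since `1 + β = (1 - aX)⁻¹`, the factor `1 - aX` cancels in
`α(1 + β) = 2bX / Q c`, so `1 - α - αβ = (Q c - 2bX) / Q c = Q (b + c) / Q c`. Likewise
`1 - α = (Q (b + c) + 2abX²) / Q c`, and dividing, the `Q c` cancel. The coefficient formula is
then read off from `X² / Q (b + c)`.
-/

section

variable {k : Type*} [Field k]

theorem PowerSeries.inv_inv {φ : k⟦X⟧} (hφ : constantCoeff φ ≠ 0) : φ⁻¹⁻¹ = φ :=
  (PowerSeries.inv_eq_iff_mul_eq_one (by simpa using hφ)).2 (PowerSeries.mul_inv_cancel φ hφ)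

theorem PowerSeries.mul_inv_mul_mul_inv_inv {φ ψ χ : k⟦X⟧} (hψ : constantCoeff ψ ≠ 0) :
    φ * ψ⁻¹ * (χ * ψ⁻¹)⁻¹ = φ * χ⁻¹ := by
  rw [PowerSeries.mul_inv_rev, PowerSeries.inv_inv hψ, mul_assoc, ← mul_assoc ψ⁻¹,
    PowerSeries.inv_mul_cancel ψ hψ, one_mul]

theorem one_add_C_mul_X_mul_inv (a : k) :
    1 + C a * X * (1 - C a * X)⁻¹ = (1 - C a * X)⁻¹ := by
  rw [PowerSeries.eq_inv_iff_mul_eq_one (by simp)]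
  linear_combination C a * X * PowerSeries.inv_mul_cancel (1 - C a * X) (by simp)

variable (a b c : k)

theorem alpha_mul_beta :
    C (2 * b) * X * (1 - C a * X) * (1 - C (2 * c) * X + X ^ 2)⁻¹ *
      (C a * X * (1 - C a * X)⁻¹) =
      C (2 * a * b) * X ^ 2 * (1 - C (2 * c) * X + X ^ 2)⁻¹ := by
  linear_combination (norm := (simp only [map_mul, map_ofNat]; ring))
    C 2 * C a * C b * X ^ 2 * (1 - C (2 * c) * X + X ^ 2)⁻¹ *
      PowerSeries.mul_inv_cancel (1 - C a * X) (by simp)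

theorem one_sub_alpha_sub_alpha_mul_beta :
    1 - C (2 * b) * X * (1 - C a * X) * (1 - C (2 * c) * X + X ^ 2)⁻¹ -
        C (2 * b) * X * (1 - C a * X) * (1 - C (2 * c) * X + X ^ 2)⁻¹ *
          (C a * X * (1 - C a * X)⁻¹) =
      (1 - C (2 * (b + c)) * X + X ^ 2) * (1 - C (2 * c) * X + X ^ 2)⁻¹ := by
  have hαβ : C (2 * b) * X * (1 - C a * X) * (1 - C (2 * c) * X + X ^ 2)⁻¹ *
      (1 + C a * X * (1 - C a * X)⁻¹) = C (2 * b) * X * (1 - C (2 * c) * X + X ^ 2)⁻¹ := by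
    rw [one_add_C_mul_X_mul_inv]
    linear_combination C (2 * b) * X * (1 - C (2 * c) * X + X ^ 2)⁻¹ *
      PowerSeries.mul_inv_cancel (1 - C a * X) (by simp)
  rw [sub_sub, ← mul_one_add, hαβ, PowerSeries.eq_mul_inv_iff_mul_eq (by simp)]
  linear_combination (norm := (simp only [map_mul, map_add, map_ofNat]; ring))
    -(C 2 * C b * X) * PowerSeries.inv_mul_cancel (1 - C (2 * c) * X + X ^ 2) (by simp)

theorem one_sub_alpha :
    1 - C (2 * b) * X * (1 - C a * X) * (1 - C (2 * c) * X + X ^ 2)⁻¹ =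
      (1 - C (2 * (b + c)) * X + X ^ 2 + C (2 * a * b) * X ^ 2) *
        (1 - C (2 * c) * X + X ^ 2)⁻¹ := by
  rw [PowerSeries.eq_mul_inv_iff_mul_eq (by simp)]
  linear_combination (norm := (simp only [map_mul, map_add, map_ofNat]; ring))
    -(C 2 * C b * X * (1 - C a * X)) *
      PowerSeries.inv_mul_cancel (1 - C (2 * c) * X + X ^ 2) (by simp)

end

theorem coeff_add_two_one_add_C_mul_X_sq_mul {R : Type*} [CommSemiring R] (r : R) (φ : R⟦X⟧)
    (n : ℕ) : coeff (n + 2) (1 + C r * X ^ 2 * φ) = r * coeff n φ := by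
  rw [map_add, coeff_one, if_neg (by omega), mul_comm (C r), mul_assoc, coeff_X_pow_mul,
    coeff_C_mul, zero_add]

theorem stmt15_general (U : ℚ → ℕ → ℚ)
    (hU : ∀ (t : ℚ) (n : ℕ),
      U t n = coeff n ((1 - C (2 * t) * X + X ^ 2)⁻¹))
    (a b c : ℚ)
    (α β γ : PowerSeries ℚ)
    (hα : α = C (2 * b) * X * (1 - C a * X) * (1 - C (2 * c) * X + X ^ 2)⁻¹)
    (hβ : β = C a * X * (1 - C a * X)⁻¹)
    (hγ : γ = C (2 * a * b) * X ^ 2 * (1 - C (2 * c) * X + X ^ 2)⁻¹) :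
    γ = α * β ∧
    (1 - α) * (1 - α - α * β)⁻¹ =
      1 + C (2 * a * b) * X ^ 2 * (1 - C (2 * (b + c)) * X + X ^ 2)⁻¹ ∧
    ∀ n : ℕ, 2 ≤ n →
      coeff n ((1 - α) * (1 - α - α * β)⁻¹) = 2 * a * b * U (b + c) (n - 2) := by
  have hratio : (1 - α) * (1 - α - α * β)⁻¹ =
      1 + C (2 * a * b) * X ^ 2 * (1 - C (2 * (b + c)) * X + X ^ 2)⁻¹ := by
    rw [hα, hβ, one_sub_alpha_sub_alpha_mul_beta, one_sub_alpha,
      PowerSeries.mul_inv_mul_mul_inv_inv (by simp), add_mul,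
      PowerSeries.mul_inv_cancel _ (by simp)]
  refine ⟨by rw [hγ, hα, hβ, alpha_mul_beta], hratio, fun n hn => ?_⟩
  obtain ⟨m, rfl⟩ := Nat.exists_eq_add_of_le' hn
  rw [hratio, coeff_add_two_one_add_C_mul_X_sq_mul, hU, Nat.add_sub_cancel]

theorem stmt15 (U : ℚ → ℕ → ℚ)
    (hU : ∀ (t : ℚ) (n : ℕ),
      U t n = coeff n ((1 - C (2 * t) * X + X ^ 2)⁻¹))
    (a b c : ℚ) (ha : 0 ≤ a) (hb : 0 ≤ b) (hc : 0 ≤ c)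
    (α β γ : PowerSeries ℚ)
    (hα : α = C (2 * b) * X * (1 - C a * X) * (1 - C (2 * c) * X + X ^ 2)⁻¹)
    (hβ : β = C a * X * (1 - C a * X)⁻¹)
    (hγ : γ = C (2 * a * b) * X ^ 2 * (1 - C (2 * c) * X + X ^ 2)⁻¹) :
    γ = α * β ∧
    (1 - α) * (1 - α - α * β)⁻¹ =
      1 + C (2 * a * b) * X ^ 2 * (1 - C (2 * (b + c)) * X + X ^ 2)⁻¹ ∧
    ∀ n : ℕ, 2 ≤ n →
      coeff n ((1 - α) * (1 - α - α * β)⁻¹) = 2 * a * b * U (b + c) (n - 2) :=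
  stmt15_general U hU a b c α β γ hα hβ hγ
end

section
/- Let r ≥ 1, m ≥ 0 and let T be the formal power series over ℚ with constant term 1 satisfying T = 1 + x·T^{r+1}. Set α = x·T^r and β = x·T^m. Then (1 - α)/(1 - α - αβ) = 1/(1 - (T-1)²·T^{m-r-1}) in ℚ[[x]], that is, (1-xT^r)/(1-xT^r - x²T^{m+r}) · (1 - (T-1)²T^{m-r-1}) = 1. -/
open PowerSeries

theorem stmt18 (r m : ℕ) (hr : 1 ≤ r) (T : PowerSeries ℚ)
    (hT0 : constantCoeff T = 1) (hT : T = 1 + X * T ^ (r + 1)) :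
    (1 - X * T ^ r) * (1 - X * T ^ r - X ^ 2 * T ^ (m + r))⁻¹ *
        (1 - (T - 1) ^ 2 * (T ^ m * (T ^ (r + 1))⁻¹)) = 1 := by
  have hinv : T ^ (r + 1) * (T ^ (r + 1))⁻¹ = 1 :=
    PowerSeries.mul_inv_cancel _ (by simp [hT0])
  set A := 1 - X * T ^ r - X ^ 2 * T ^ (m + r) with hAdef
  have hA0 : constantCoeff A = 1 := by
    simp [hAdef, hT0]
  have hAinv : A * A⁻¹ = 1 :=
    PowerSeries.mul_inv_cancel _ (by rw [hA0]; norm_num)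
  have h1 : T - 1 = X * T ^ (r + 1) := by linear_combination hT
  have h2 : (T - 1) ^ 2 * (T ^ m * (T ^ (r + 1))⁻¹) = X ^ 2 * T ^ (m + r + 1) := by
    rw [h1]
    calc (X * T ^ (r + 1)) ^ 2 * (T ^ m * (T ^ (r + 1))⁻¹)
        = X ^ 2 * T ^ (m + r + 1) * (T ^ (r + 1) * (T ^ (r + 1))⁻¹) := by ring
      _ = X ^ 2 * T ^ (m + r + 1) := by rw [hinv, mul_one]
  have key : (1 - X * T ^ r) * (1 - (T - 1) ^ 2 * (T ^ m * (T ^ (r + 1))⁻¹)) = A := by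
    rw [h2, hAdef]
    linear_combination (-(X ^ 2 * T ^ (m + r))) * hT
  calc (1 - X * T ^ r) * A⁻¹ * (1 - (T - 1) ^ 2 * (T ^ m * (T ^ (r + 1))⁻¹))
      = (1 - X * T ^ r) * (1 - (T - 1) ^ 2 * (T ^ m * (T ^ (r + 1))⁻¹)) * A⁻¹ := by ring
    _ = A * A⁻¹ := by rw [key]
    _ = 1 := hAinv
end

section
/- Let r ≥ 1, m ≥ 0 and let T be the formal power series over ℚ with constant term 1 satisfying T = 1 + x·T^{r+1}. Then 1/(1 - xT^r - x³T^{m+2r}/(1 - xT^r)) = T/(1 - (T-1)³·T^{m-r-1}) in ℚ[[x]] (interpreting negative powers of T via the inverse of the unit T). -/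
open PowerSeries

/-!
From `T = 1 + X T^(r+1)` one gets `T (1 - X T^r) = 1`, so `1 - X T^r` is the inverse of `T`.
Hence `(T - 1)^3 T^(m-r-1) = X^3 T^(m+2r+2)` and the left denominator factors as
`(1 - X T^r)(1 - X^3 T^(m+2r+2))`, so both sides equal `T / (1 - X^3 T^(m+2r+2))`.
-/

namespace PowerSeries

variable {k : Type*} [Field k]

theorem inv_eq_of_mul_eq_one {φ ψ : k⟦X⟧} (h : φ * ψ = 1) : ψ⁻¹ = φ := by
  have hψ : constantCoeff ψ ≠ 0 :=
    right_ne_zero_of_mul_eq_one (by rw [← map_mul, h, map_one])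
  exact (inv_eq_iff_mul_eq_one hψ).mpr h

theorem mul_one_sub_X_mul_pow_eq_one {r : ℕ} {T : k⟦X⟧} (hT : T = 1 + X * T ^ (r + 1)) :
    T * (1 - X * T ^ r) = 1 := by
  linear_combination hT

end PowerSeries

theorem stmt19_general (r m : ℕ) (T : PowerSeries ℚ)
    (hT : T = 1 + X * T ^ (r + 1)) :
    (1 - X * T ^ r - X ^ 3 * T ^ (m + 2 * r) * (1 - X * T ^ r)⁻¹)⁻¹ =
      T * (1 - (T - 1) ^ 3 * (T ^ m * (T ^ (r + 1))⁻¹))⁻¹ := by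
  set u := 1 - X * T ^ r
  have hTu : T * u = 1 := mul_one_sub_X_mul_pow_eq_one hT
  clear_value u
  have hu_inv : u⁻¹ = T := inv_eq_of_mul_eq_one hTu
  have hpow_inv : (T ^ (r + 1))⁻¹ = u ^ (r + 1) :=
    inv_eq_of_mul_eq_one (by rw [← mul_pow, mul_comm, hTu, one_pow])
  have hnum : (T - 1) ^ 3 * (T ^ m * u ^ (r + 1)) = X ^ 3 * T ^ (m + 2 * r + 2) := by
    calc (T - 1) ^ 3 * (T ^ m * u ^ (r + 1))
        = X ^ 3 * T ^ (m + 2 * r + 2) * (T * u) ^ (r + 1) := by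
          rw [show T - 1 = X * T ^ (r + 1) by linear_combination hT]; ring
      _ = X ^ 3 * T ^ (m + 2 * r + 2) := by rw [hTu, one_pow, mul_one]
  have hden : u - X ^ 3 * T ^ (m + 2 * r) * T = u * (1 - X ^ 3 * T ^ (m + 2 * r + 2)) := by
    linear_combination X ^ 3 * T ^ (m + 2 * r + 1) * hTu
  rw [hu_inv, hpow_inv, hnum, hden, PowerSeries.mul_inv_rev, hu_inv, mul_comm]

theorem stmt19 (r m : ℕ) (hr : 1 ≤ r) (T : PowerSeries ℚ)
    (hT0 : constantCoeff T = 1) (hT : T = 1 + X * T ^ (r + 1)) :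
    (1 - X * T ^ r - X ^ 3 * T ^ (m + 2 * r) * (1 - X * T ^ r)⁻¹)⁻¹ =
      T * (1 - (T - 1) ^ 3 * (T ^ m * (T ^ (r + 1))⁻¹))⁻¹ :=
  stmt19_general r m T hT
end
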